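/- arXiv:2311.02770 — 6 statements merged into one kernel-verified Lean document; each statement's English description precedes it below -/
import Mathlib

section
/- Suppose a, b ∈ (π/2, π), a+b ∈ (π, 3π/2), a ≠ b, and cos(a)·sin(a)^3 = cos(b)·sin(b)^3. Then cos(a−b)·cos(2(a+b)) = cos(a+b) and 4π/3 < a+b < 3π/2. -/
/-! Since `cos x sin³ x = (2 sin 2x - sin 4x) / 8`, sum-to-product factors the difference of the two
sides of the hypothesis as `sin (a - b) · (cos (a + b) - cos (a - b) cos (2(a + b))) / 2`, and
`sin (a - b) ≠ 0` gives the identity. In it `d = cos (a - b) ∈ (0, 1)` and `c = cos (a + b) < 0`,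
so `c = d (2c² - 1) > 2c² - 1`, i.e. `c > -1/2`, which on `(π, 3π/2)` means `a + b > 4π/3`. -/

open Real Set

namespace Real

theorem cos_mul_sin_pow_three (x : ℝ) :
    cos x * sin x ^ 3 = (2 * sin (2 * x) - sin (4 * x)) / 8 := by
  rw [show 4 * x = 2 * (2 * x) by ring, sin_two_mul (2 * x), sin_two_mul, cos_two_mul]
  linear_combination sin x * cos x * sin_sq_add_cos_sq x

theorem cos_mul_sin_pow_three_sub_cos_mul_sin_pow_three (a b : ℝ) :
    cos a * sin a ^ 3 - cos b * sin b ^ 3 =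
      sin (a - b) * (cos (a + b) - cos (a - b) * cos (2 * (a + b))) / 2 := by
  have h₂ : sin (2 * a) - sin (2 * b) = 2 * sin (a - b) * cos (a + b) := by
    rw [sin_sub_sin, show (2 * a - 2 * b) / 2 = a - b by ring,
      show (2 * a + 2 * b) / 2 = a + b by ring]
  have h₄ : sin (4 * a) - sin (4 * b) =
      4 * sin (a - b) * cos (a - b) * cos (2 * (a + b)) := by
    rw [sin_sub_sin, show (4 * a - 4 * b) / 2 = 2 * (a - b) by ring,
      show (4 * a + 4 * b) / 2 = 2 * (a + b) by ring, sin_two_mul]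
    ring
  rw [cos_mul_sin_pow_three, cos_mul_sin_pow_three]
  linear_combination h₂ / 4 - h₄ / 8

theorem four_pi_div_three_lt_of_neg_half_lt_cos {x : ℝ} (hx : x ∈ Icc π (2 * π))
    (h : -(1 / 2) < cos x) : 4 * π / 3 < x := by
  have hshift : cos (x - π) < cos (π / 3) := by
    rw [cos_sub_pi, cos_pi_div_three]
    linarith
  have := (strictAntiOn_cos.lt_iff_gt ⟨by linarith [hx.1], by linarith [hx.2]⟩
    ⟨by linarith [pi_pos], by linarith [pi_pos]⟩).1 hshift
  linarith

end Real

theorem neg_half_lt_of_mul_two_mul_sq_sub_one_eq {c d : ℝ} (hc : c < 0) (hd₀ : 0 < d)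
    (hd₁ : d < 1) (h : d * (2 * c ^ 2 - 1) = c) : -(1 / 2) < c := by
  have hneg : 2 * c ^ 2 - 1 < 0 := by
    by_contra! hnn
    nlinarith [mul_nonneg hd₀.le hnn]
  have hgt : 2 * c ^ 2 - 1 < c := by nlinarith [mul_pos (sub_pos.2 hd₁) (neg_pos.2 hneg)]
  nlinarith

theorem stmt_8 (a b : ℝ) (ha : a ∈ Ioo (π / 2) π) (hb : b ∈ Ioo (π / 2) π)
    (hab : a + b ∈ Ioo π (3 * π / 2)) (hne : a ≠ b)
    (heq : cos a * sin a ^ 3 = cos b * sin b ^ 3) :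
    cos (a - b) * cos (2 * (a + b)) = cos (a + b) ∧
      4 * π / 3 < a + b ∧ a + b < 3 * π / 2 := by
  obtain ⟨ha₁, ha₂⟩ := ha
  obtain ⟨hb₁, hb₂⟩ := hb
  have hsub : a - b ≠ 0 := sub_ne_zero.2 hne
  have hsin : sin (a - b) ≠ 0 := fun h ↦
    hsub <| (sin_eq_zero_iff_of_lt_of_lt (by linarith) (by linarith)).1 h
  have hrel : cos (a - b) * cos (2 * (a + b)) = cos (a + b) := by
    have h := cos_mul_sin_pow_three_sub_cos_mul_sin_pow_three a b
    rw [heq, sub_self, eq_comm, div_eq_zero_iff, mul_eq_zero] at h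
    rcases h with (h | h) | h
    exacts [absurd h hsin, (sub_eq_zero.1 h).symm, absurd h two_ne_zero]
  refine ⟨hrel, four_pi_div_three_lt_of_neg_half_lt_cos ⟨hab.1.le, by linarith [hab.2, pi_pos]⟩
    (neg_half_lt_of_mul_two_mul_sq_sub_one_eq (d := cos (a - b)) ?_ ?_ ?_ ?_), hab.2⟩
  · exact cos_neg_of_pi_div_two_lt_of_lt (by linarith [hab.1]) (by linarith [hab.2])
  · exact cos_pos_of_mem_Ioo ⟨by linarith, by linarith⟩
  · exact (cos_le_one _).lt_of_ne fun h ↦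
      hsub <| (cos_eq_one_iff_of_lt_of_lt (by linarith) (by linarith)).1 h
  · rwa [← cos_two_mul]
end

section
/- Suppose a, b and a+b all lie in (0, π/2) with a ≠ b, and cos(a)·sin(a)^3 = cos(b)·sin(b)^3 and (1/2)·(cos(a)·sin(a)^3 + cos(b)·sin(b)^3) = cos(a+b)·sin(a+b)^3. Then a contradiction follows; i.e., no such a, b exist. -/
open Real Set

/-! The function `f x = cos x * sin x ^ 3` has derivative `sin² x (4 cos² x - 1)`, so on `[0, π/2]`
it increases strictly up to `π/3` and decreases strictly after it. Taking `a < b`, the equation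
`f a = f b` forces `a < π/3 < b`; the second equation then reads `f (a + b) = f b`, with both `b` and
`a + b` in the decreasing branch `[π/3, π/2]`, so `a + b = b`, contradicting `0 < a`. -/

lemma lt_and_lt_of_strictMonoOn_of_strictAntiOn {α β : Type*} [LinearOrder α] [Preorder β]
    {f : α → β} {l m r x y : α} (hmono : StrictMonoOn f (Icc l m))
    (hanti : StrictAntiOn f (Icc m r)) (hx : l ≤ x) (hy : y ≤ r) (hxy : x < y)
    (hf : f x = f y) : x < m ∧ m < y := by
  constructor
  · by_contra! hmx
    exact (hanti ⟨hmx, hxy.le.trans hy⟩ ⟨hmx.trans hxy.le, hy⟩ hxy).ne' hf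
  · by_contra! hym
    exact (hmono ⟨hx, hxy.le.trans hym⟩ ⟨hx.trans hxy.le, hym⟩ hxy).ne hf

lemma hasDerivAt_cos_mul_sin_pow_three (x : ℝ) :
    HasDerivAt (fun y => cos y * sin y ^ 3) (sin x ^ 2 * (4 * cos x ^ 2 - 1)) x := by
  refine ((hasDerivAt_cos x).mul ((hasDerivAt_sin x).pow 3)).congr_deriv ?_
  rw [Pi.pow_apply]
  linear_combination (-sin x ^ 2) * sin_sq_add_cos_sq x

lemma strictMonoOn_cos_mul_sin_pow_three :
    StrictMonoOn (fun y => cos y * sin y ^ 3) (Icc 0 (π / 3)) := by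
  refine strictMonoOn_of_deriv_pos (convex_Icc _ _) (by fun_prop) fun x hx => ?_
  rw [interior_Icc] at hx
  rw [(hasDerivAt_cos_mul_sin_pow_three x).deriv]
  have hsin : 0 < sin x := sin_pos_of_pos_of_lt_pi hx.1 (by linarith [pi_pos, hx.2])
  have hcos : 1 / 2 < cos x := by
    rw [← cos_pi_div_three]
    exact cos_lt_cos_of_nonneg_of_le_pi hx.1.le (by linarith [pi_pos]) hx.2
  have : 0 < 4 * cos x ^ 2 - 1 := by nlinarith
  positivity

lemma strictAntiOn_cos_mul_sin_pow_three :
    StrictAntiOn (fun y => cos y * sin y ^ 3) (Icc (π / 3) (π / 2)) := by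
  refine strictAntiOn_of_deriv_neg (convex_Icc _ _) (by fun_prop) fun x hx => ?_
  rw [interior_Icc] at hx
  rw [(hasDerivAt_cos_mul_sin_pow_three x).deriv]
  have hsin : 0 < sin x := sin_pos_of_pos_of_lt_pi (by linarith [pi_pos, hx.1]) (by linarith [pi_pos, hx.2])
  have hcos_pos : 0 < cos x := cos_pos_of_mem_Ioo ⟨by linarith [pi_pos, hx.1], hx.2⟩
  have hcos : cos x < 1 / 2 := by
    rw [← cos_pi_div_three]
    exact cos_lt_cos_of_nonneg_of_le_pi (by positivity) (by linarith [pi_pos, hx.2]) hx.1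
  have : 4 * cos x ^ 2 - 1 < 0 := by nlinarith
  exact mul_neg_of_pos_of_neg (by positivity) this

theorem stmt_10 (a b : ℝ) (ha : a ∈ Ioo 0 (π / 2)) (hb : b ∈ Ioo 0 (π / 2))
    (hab : a + b ∈ Ioo 0 (π / 2)) (hne : a ≠ b)
    (heq1 : cos a * sin a ^ 3 = cos b * sin b ^ 3)
    (heq2 : (1 / 2) * (cos a * sin a ^ 3 + cos b * sin b ^ 3) =
      cos (a + b) * sin (a + b) ^ 3) :
    False := by
  wlog hlt : a < b generalizing a b
  · exact this b a hb ha (add_comm a b ▸ hab) hne.symm heq1.symm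
      (by rw [add_comm b a]; linarith) (hne.lt_or_gt.resolve_left hlt)
  obtain ⟨-, hb_third⟩ := lt_and_lt_of_strictMonoOn_of_strictAntiOn
    strictMonoOn_cos_mul_sin_pow_three strictAntiOn_cos_mul_sin_pow_three ha.1.le hb.2.le hlt heq1
  have hb_eq : b = a + b :=
    strictAntiOn_cos_mul_sin_pow_three.injOn ⟨hb_third.le, hb.2.le⟩
      ⟨by linarith [ha.1], hab.2.le⟩ (by linarith)
  linarith [ha.1]
end

section
/- Suppose a, b ∈ (π/2, π) and a+b ∈ (π, 3π/2), and cos(a)·sin(a)^3 = cos(b)·sin(b)^3 and (1/2)·(cos(a)·sin(a)^3 + cos(b)·sin(b)^3) = −cos(a+b)·sin(a+b)^3. Then a = b = 2π/3. -/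
/-!
Put `f x = cos x * sin x ^ 3`, which is odd and `π`-periodic. The angles `π - a`, `π - b` and
`a + b - π` lie in `(0, π/2)`, sum to `π`, and the hypotheses say that `f` takes the same value
at all three. Since `f' = sin² (4 cos² - 1)`, `f` increases on `[0, π/3]` and decreases on
`[π/3, π/2]`, so two of the three angles lie on the same branch and coincide, say both equal `x`.
The third is then `π - 2x`, and `f x - f (π - 2x) = cos x sin³ x (4 cos² x - 1)²` vanishes on
`(0, π/2)` only at `x = π/3`.
-/

open Real Set

noncomputable def cosMulSinCube (x : ℝ) : ℝ := cos x * sin x ^ 3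

namespace cosMulSinCube

lemma neg (x : ℝ) : cosMulSinCube (-x) = -cosMulSinCube x := by
  simp only [cosMulSinCube, cos_neg, sin_neg]
  ring

lemma sub_pi (x : ℝ) : cosMulSinCube (x - π) = cosMulSinCube x := by
  simp only [cosMulSinCube, cos_sub_pi, sin_sub_pi]
  ring

lemma pi_sub (x : ℝ) : cosMulSinCube (π - x) = -cosMulSinCube x := by
  rw [← neg_sub, neg, sub_pi]

lemma hasDerivAt (x : ℝ) :
    HasDerivAt cosMulSinCube (sin x ^ 2 * (4 * cos x ^ 2 - 1)) x := by
  refine ((hasDerivAt_cos x).mul ((hasDerivAt_sin x).pow 3)).congr_deriv ?_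
  simp only [Pi.pow_apply, Nat.cast_ofNat, Nat.add_one_sub_one]
  linear_combination -sin x ^ 2 * sin_sq_add_cos_sq x

lemma continuous : Continuous cosMulSinCube :=
  continuous_cos.mul (continuous_sin.pow 3)

lemma strictMonoOn : StrictMonoOn cosMulSinCube (Icc 0 (π / 3)) := by
  refine strictMonoOn_of_deriv_pos (convex_Icc _ _) continuous.continuousOn fun x hx => ?_
  rw [interior_Icc] at hx
  obtain ⟨hx0, hx3⟩ := hx
  rw [(hasDerivAt x).deriv]
  have hsin : 0 < sin x := sin_pos_of_pos_of_lt_pi hx0 (by linarith [pi_pos])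
  have hcos : 1 / 2 < cos x := by
    rw [← cos_pi_div_three]
    exact cos_lt_cos_of_nonneg_of_le_pi hx0.le (by linarith [pi_pos]) hx3
  have : 0 < 4 * cos x ^ 2 - 1 := by nlinarith
  positivity

lemma strictAntiOn : StrictAntiOn cosMulSinCube (Icc (π / 3) (π / 2)) := by
  refine strictAntiOn_of_deriv_neg (convex_Icc _ _) continuous.continuousOn fun x hx => ?_
  rw [interior_Icc] at hx
  obtain ⟨hx3, hx2⟩ := hx
  rw [(hasDerivAt x).deriv]
  have hpi := pi_pos
  have hsin : 0 < sin x := sin_pos_of_pos_of_lt_pi (by linarith) (by linarith)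
  have hcos : cos x < 1 / 2 := by
    rw [← cos_pi_div_three]
    exact cos_lt_cos_of_nonneg_of_le_pi (by linarith) (by linarith) hx3
  have hcos0 : 0 < cos x := cos_pos_of_mem_Ioo ⟨by linarith, hx2⟩
  have : 4 * cos x ^ 2 - 1 < 0 := by nlinarith
  exact mul_neg_of_pos_of_neg (by positivity) this

lemma eq_of_eq_of_le_iff_le {x y : ℝ} (hx : x ∈ Ioo 0 (π / 2)) (hy : y ∈ Ioo 0 (π / 2))
    (hxy : cosMulSinCube x = cosMulSinCube y) (hside : x ≤ π / 3 ↔ y ≤ π / 3) : x = y := by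
  by_cases hx3 : x ≤ π / 3
  · exact strictMonoOn.injOn ⟨hx.1.le, hx3⟩ ⟨hy.1.le, hside.1 hx3⟩ hxy
  · have hy3 : ¬y ≤ π / 3 := hside.not.1 hx3
    exact strictAntiOn.injOn ⟨(not_le.1 hx3).le, hx.2.le⟩ ⟨(not_le.1 hy3).le, hy.2.le⟩ hxy

lemma sub_pi_sub_two_mul (x : ℝ) :
    cosMulSinCube x - cosMulSinCube (π - 2 * x) = cos x * sin x ^ 3 * (4 * cos x ^ 2 - 1) ^ 2 := by
  rw [pi_sub, cosMulSinCube, cosMulSinCube, cos_two_mul, sin_two_mul]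
  ring

lemma eq_pi_div_three_of_eq_pi_sub_two_mul {x : ℝ} (hx : x ∈ Ioo 0 (π / 2))
    (h : cosMulSinCube x = cosMulSinCube (π - 2 * x)) : x = π / 3 := by
  have hpi := pi_pos
  have hsin : 0 < sin x := sin_pos_of_pos_of_lt_pi hx.1 (by linarith [hx.2])
  have hcos : 0 < cos x := cos_pos_of_mem_Ioo ⟨by linarith [hx.1], hx.2⟩
  have hsq : (4 * cos x ^ 2 - 1) ^ 2 = 0 := by
    have := sub_pi_sub_two_mul x
    rw [h, sub_self, eq_comm] at this
    simpa [hcos.ne', hsin.ne'] using this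
  have hcos_half : cos x = cos (π / 3) := by
    rw [cos_pi_div_three]
    nlinarith [pow_eq_zero_iff two_ne_zero |>.1 hsq]
  exact injOn_cos ⟨hx.1.le, by linarith [hx.2]⟩ ⟨by linarith, by linarith⟩ hcos_half

lemma eq_pi_div_three_of_eq_of_add_add_eq_pi {x y z : ℝ} (hx : x ∈ Ioo 0 (π / 2))
    (hy : y ∈ Ioo 0 (π / 2)) (hz : z ∈ Ioo 0 (π / 2)) (hsum : x + y + z = π)
    (hxy : cosMulSinCube x = cosMulSinCube y) (hyz : cosMulSinCube y = cosMulSinCube z) :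
    x = π / 3 ∧ y = π / 3 ∧ z = π / 3 := by
  have two_eq : x = y ∨ y = z ∨ x = z := by
    by_cases h₁ : x ≤ π / 3 ↔ y ≤ π / 3
    · exact .inl (eq_of_eq_of_le_iff_le hx hy hxy h₁)
    by_cases h₂ : y ≤ π / 3 ↔ z ≤ π / 3
    · exact .inr (.inl (eq_of_eq_of_le_iff_le hy hz hyz h₂))
    exact .inr (.inr (eq_of_eq_of_le_iff_le hx hz (hxy.trans hyz) (by tauto)))
  rcases two_eq with h | h | h
  · have := eq_pi_div_three_of_eq_pi_sub_two_mul hx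
      (by rwa [show π - 2 * x = z by linarith, hxy])
    refine ⟨?_, ?_, ?_⟩ <;> linarith
  · have := eq_pi_div_three_of_eq_pi_sub_two_mul hy
      (by rw [show π - 2 * y = x by linarith, hxy])
    refine ⟨?_, ?_, ?_⟩ <;> linarith
  · have := eq_pi_div_three_of_eq_pi_sub_two_mul hx
      (by rwa [show π - 2 * x = y by linarith])
    refine ⟨?_, ?_, ?_⟩ <;> linarith

end cosMulSinCube

open cosMulSinCube in
theorem stmt_11 (a b : ℝ) (ha : a ∈ Ioo (π / 2) π) (hb : b ∈ Ioo (π / 2) π)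
    (hab : a + b ∈ Ioo π (3 * π / 2))
    (heq1 : cos a * sin a ^ 3 = cos b * sin b ^ 3)
    (heq2 : (1 / 2) * (cos a * sin a ^ 3 + cos b * sin b ^ 3) =
      -(cos (a + b) * sin (a + b) ^ 3)) :
    a = 2 * π / 3 ∧ b = 2 * π / 3 := by
  have hα : π - a ∈ Ioo 0 (π / 2) := ⟨by linarith [ha.2], by linarith [ha.1]⟩
  have hβ : π - b ∈ Ioo 0 (π / 2) := ⟨by linarith [hb.2], by linarith [hb.1]⟩
  have hγ : a + b - π ∈ Ioo 0 (π / 2) := ⟨by linarith [hab.1], by linarith [hab.2]⟩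
  have hαβ : cosMulSinCube (π - a) = cosMulSinCube (π - b) := by
    rw [pi_sub, pi_sub, cosMulSinCube, cosMulSinCube, heq1]
  have hβγ : cosMulSinCube (π - b) = cosMulSinCube (a + b - π) := by
    rw [pi_sub, sub_pi, cosMulSinCube, cosMulSinCube]
    linarith
  obtain ⟨hα3, hβ3, -⟩ := eq_pi_div_three_of_eq_of_add_add_eq_pi hα hβ hγ (by ring) hαβ hβγ
  constructor <;> linarith
end

section
/- There are no positive real numbers m1, m2, m3 satisfying both (22−12√2)·m1 − (10−√2)·(m2+m3) = 0 and (10−√2)·(m1+m3) − (22−12√2)·m2 = 0. (Indeed, the unique solution of this linear system has m1 = m2 = −(1+√2)·m3.) -/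
open Real

/-- Adding the two equations gives `(a + b) (m₁ - m₂) = 0`, so `m₁ = m₂`; the first equation then
reads `(a - b) m₁ = b m₃`, whose sides have opposite signs. -/
theorem not_exists_pos_solution {a b : ℝ} (ha : 0 < a) (hab : a < b) :
    ¬ ∃ m1 m2 m3 : ℝ, 0 < m1 ∧ 0 < m2 ∧ 0 < m3 ∧
      a * m1 - b * (m2 + m3) = 0 ∧ b * (m1 + m3) - a * m2 = 0 := by
  rintro ⟨m1, m2, m3, h1, -, h3, e1, e2⟩
  have hsum : (a + b) * (m1 - m2) = 0 := by linear_combination e1 + e2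
  have hm : m1 = m2 := by
    have := (mul_eq_zero.mp hsum).resolve_left (by linarith)
    linarith
  subst hm
  have key : (a - b) * m1 = b * m3 := by linear_combination e1
  linarith [mul_pos (sub_pos.mpr hab) h1, mul_pos (ha.trans hab) h3]

theorem twentytwo_sub_twelve_mul_sqrt_two_pos : 0 < 22 - 12 * √2 := by
  have : √2 < 11 / 6 := (Real.sqrt_lt' (by norm_num)).mpr (by norm_num)
  linarith

theorem twentytwo_sub_twelve_mul_sqrt_two_lt : 22 - 12 * √2 < 10 - √2 := by
  have : 12 / 11 < √2 := (Real.lt_sqrt (by norm_num)).mpr (by norm_num)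
  linarith

theorem stmt_15 :
    ¬ ∃ m1 m2 m3 : ℝ, 0 < m1 ∧ 0 < m2 ∧ 0 < m3 ∧
      (22 - 12 * Real.sqrt 2) * m1 - (10 - Real.sqrt 2) * (m2 + m3) = 0 ∧
      (10 - Real.sqrt 2) * (m1 + m3) - (22 - 12 * Real.sqrt 2) * m2 = 0 :=
  not_exists_pos_solution twentytwo_sub_twelve_mul_sqrt_two_pos
    twentytwo_sub_twelve_mul_sqrt_two_lt
end

section
/- Let m1, m2, m3 > 0 and θ1, θ2, θ3 real with θ_i − θ_j not a multiple of π for i ≠ j. If m1·(cos(2θ1), sin(2θ1)) + m2·(cos(2θ2), sin(2θ2)) + m3·(cos(2θ3), sin(2θ3)) = (0,0) and θ2 − θ3 = θ3 − θ1, then m1 = m2. -/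
open Real

/-
Project the vanishing sum onto the direction orthogonal to the third vector: with α = 2θ₁ - 2θ₃,
the isosceles condition makes 2θ₂ - 2θ₃ = -α, so the projection reads (m₁ - m₂) sin α = 0.
And α = θ₁ - θ₂ is not a multiple of π, so sin α ≠ 0.
-/

theorem sum_mul_sin_sub_eq_zero {m1 m2 m3 α1 α2 α3 : ℝ}
    (hcos : m1 * cos α1 + m2 * cos α2 + m3 * cos α3 = 0)
    (hsin : m1 * sin α1 + m2 * sin α2 + m3 * sin α3 = 0) :
    m1 * sin (α1 - α3) + m2 * sin (α2 - α3) = 0 := by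
  rw [sin_sub, sin_sub]
  linear_combination cos α3 * hsin - sin α3 * hcos

theorem stmt_18_general (m1 m2 m3 θ1 θ2 θ3 : ℝ)
    (hd12 : ∀ k : ℤ, θ1 - θ2 ≠ k * π)
    (hcos : m1 * cos (2 * θ1) + m2 * cos (2 * θ2) + m3 * cos (2 * θ3) = 0)
    (hsin : m1 * sin (2 * θ1) + m2 * sin (2 * θ2) + m3 * sin (2 * θ3) = 0)
    (hiso : θ2 - θ3 = θ3 - θ1) :
    m1 = m2 := by
  have hproj := sum_mul_sin_sub_eq_zero hcos hsin
  have hα : 2 * θ1 - 2 * θ3 = θ1 - θ2 := by linarith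
  have hβ : 2 * θ2 - 2 * θ3 = -(θ1 - θ2) := by linarith
  rw [hα, hβ, sin_neg] at hproj
  have hsin_ne : sin (θ1 - θ2) ≠ 0 :=
    sin_ne_zero_iff.mpr fun k hk => hd12 k hk.symm
  have hdiff : (m1 - m2) * sin (θ1 - θ2) = 0 := by linear_combination hproj
  exact sub_eq_zero.mp ((mul_eq_zero.mp hdiff).resolve_right hsin_ne)

theorem stmt_18 (m1 m2 m3 θ1 θ2 θ3 : ℝ)
    (h1 : 0 < m1) (h2 : 0 < m2) (h3 : 0 < m3)
    (hd12 : ∀ k : ℤ, θ1 - θ2 ≠ k * π)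
    (hd23 : ∀ k : ℤ, θ2 - θ3 ≠ k * π)
    (hd31 : ∀ k : ℤ, θ3 - θ1 ≠ k * π)
    (hcos : m1 * cos (2 * θ1) + m2 * cos (2 * θ2) + m3 * cos (2 * θ3) = 0)
    (hsin : m1 * sin (2 * θ1) + m2 * sin (2 * θ2) + m3 * sin (2 * θ3) = 0)
    (hiso : θ2 - θ3 = θ3 - θ1) :
    m1 = m2 :=
  stmt_18_general m1 m2 m3 θ1 θ2 θ3 hd12 hcos hsin hiso
end

section
/- Let m > 0 and τ1 ∈ (−π, π), τ2 ∈ (0, π) with sin(τ1)·sin(τ2)·sin(τ1+τ2) ≠ 0. If m·(cos(2θ1), sin(2θ1)) + m·(cos(2θ2), sin(2θ2)) + m·(cos(2θ3), sin(2θ3)) = (0,0), where τ1 = θ2−θ3 and τ2 = θ3−θ1, then (τ1, τ2) ∈ {(−2π/3, π/3), (−π/3, 2π/3), (π/3, π/3), (2π/3, 2π/3)}. -/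
open Real Set

private lemma aux1 (x : ℝ) (h0 : 0 ≤ x) (h1 : x ≤ π) (h : Real.cos x = 1/2) :
    x = π/3 := by
  have hπ := Real.pi_pos
  exact Real.injOn_cos ⟨h0, h1⟩ ⟨by positivity, by linarith⟩
    (by rw [h, Real.cos_pi_div_three])

private lemma aux2 (x : ℝ) (h0 : 0 ≤ x) (h1 : x ≤ π) (h : Real.cos x = -(1/2)) :
    x = 2*π/3 := by
  have hπ := Real.pi_pos
  have hc : Real.cos (2*π/3) = -(1/2) := by
    rw [show 2*π/3 = π - π/3 by ring, Real.cos_pi_sub, Real.cos_pi_div_three]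
  exact Real.injOn_cos ⟨h0, h1⟩ ⟨by positivity, by linarith⟩ (by rw [h, hc])

set_option maxHeartbeats 2000000 in
theorem stmt_19 (m θ1 θ2 θ3 τ1 τ2 : ℝ) (hm : 0 < m)
    (hτ1 : τ1 = θ2 - θ3) (hτ2 : τ2 = θ3 - θ1)
    (hr1 : τ1 ∈ Ioo (-π) π) (hr2 : τ2 ∈ Ioo 0 π)
    (hns : sin τ1 * sin τ2 * sin (τ1 + τ2) ≠ 0)
    (hcos : m * cos (2 * θ1) + m * cos (2 * θ2) + m * cos (2 * θ3) = 0)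
    (hsin : m * sin (2 * θ1) + m * sin (2 * θ2) + m * sin (2 * θ3) = 0) :
    (τ1, τ2) = (-(2 * π / 3), π / 3) ∨ (τ1, τ2) = (-(π / 3), 2 * π / 3) ∨
    (τ1, τ2) = (π / 3, π / 3) ∨ (τ1, τ2) = (2 * π / 3, 2 * π / 3) := by
  have hπ := Real.pi_pos
  obtain ⟨hr1a, hr1b⟩ := hr1
  obtain ⟨hr2a, hr2b⟩ := hr2
  have hθ2 : θ2 = θ1 + (τ1 + τ2) := by rw [hτ1, hτ2]; ring
  have hθ3 : θ3 = θ1 + τ2 := by rw [hτ2]; ring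
  have h1 : cos (2*θ1) + cos (2*θ2) + cos (2*θ3) = 0 := by
    have h : m * (cos (2*θ1) + cos (2*θ2) + cos (2*θ3)) = 0 := by linarith
    rcases mul_eq_zero.mp h with h | h
    · exact absurd h hm.ne'
    · exact h
  have h2 : sin (2*θ1) + sin (2*θ2) + sin (2*θ3) = 0 := by
    have h : m * (sin (2*θ1) + sin (2*θ2) + sin (2*θ3)) = 0 := by linarith
    rcases mul_eq_zero.mp h with h | h
    · exact absurd h hm.ne'
    · exact h
  rw [hθ2, hθ3, show 2*(θ1 + (τ1 + τ2)) = 2*θ1 + 2*(τ1+τ2) by ring,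
    show 2*(θ1 + τ2) = 2*θ1 + 2*τ2 by ring, Real.cos_add, Real.cos_add] at h1
  rw [hθ2, hθ3, show 2*(θ1 + (τ1 + τ2)) = 2*θ1 + 2*(τ1+τ2) by ring,
    show 2*(θ1 + τ2) = 2*θ1 + 2*τ2 by ring, Real.sin_add, Real.sin_add] at h2
  have P := Real.sin_sq_add_cos_sq (2*θ1)
  have E1 : 1 + cos (2*(τ1+τ2)) + cos (2*τ2) = 0 := by
    linear_combination cos (2*θ1) * h1 + sin (2*θ1) * h2 -
      (1 + cos (2*(τ1+τ2)) + cos (2*τ2)) * P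
  have E2 : sin (2*(τ1+τ2)) + sin (2*τ2) = 0 := by
    linear_combination cos (2*θ1) * h2 - sin (2*θ1) * h1 -
      (sin (2*(τ1+τ2)) + sin (2*τ2)) * P
  have Pu := Real.sin_sq_add_cos_sq (2*(τ1+τ2))
  have Pv := Real.sin_sq_add_cos_sq (2*τ2)
  have hcv : cos (2*τ2) = -(1/2) := by
    linear_combination (1/2)*Pu - (1/2)*Pv +
      ((1 - cos (2*(τ1+τ2)) + cos (2*τ2))/2)*E1 -
      ((sin (2*(τ1+τ2)) - sin (2*τ2))/2)*E2
  have hcu : cos (2*(τ1+τ2)) = -(1/2) := by linarith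
  have hsτ2 : 0 < sin τ2 := Real.sin_pos_of_pos_of_lt_pi hr2a hr2b
  have hc2 : (cos τ2 - 1/2) * (cos τ2 + 1/2) = 0 := by
    linear_combination (1/2)*hcv - (1/2)*(Real.cos_two_mul τ2)
  have hct : (cos (τ1+τ2) - 1/2) * (cos (τ1+τ2) + 1/2) = 0 := by
    linear_combination (1/2)*hcu - (1/2)*(Real.cos_two_mul (τ1+τ2))
  have hprod : 2 * sin (τ1+τ2) * cos (τ1+τ2) = -(2 * sin τ2 * cos τ2) := by
    have a := Real.sin_two_mul (τ1+τ2)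
    have b := Real.sin_two_mul τ2
    linarith
  -- generic sign facts for t = τ1+τ2
  have sin_nonpos_neg : ∀ x : ℝ, -π ≤ x → x ≤ 0 → sin x ≤ 0 := by
    intro x hx0 hx1
    have := Real.sin_nonneg_of_nonneg_of_le_pi (show (0:ℝ) ≤ -x by linarith)
      (show -x ≤ π by linarith)
    rw [Real.sin_neg] at this; linarith
  have sin_nonpos_big : ∀ x : ℝ, π ≤ x → x ≤ 2*π → sin x ≤ 0 := by
    intro x hx0 hx1
    have := Real.sin_nonneg_of_nonneg_of_le_pi (show (0:ℝ) ≤ x - π by linarith)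
      (show x - π ≤ π by linarith)
    have h := Real.sin_add_pi (x - π)
    rw [show x - π + π = x by ring] at h
    linarith
  rcases mul_eq_zero.mp hc2 with hA | hB
  · -- cos τ2 = 1/2, τ2 = π/3
    have hcτ2 : cos τ2 = 1/2 := by linarith
    have hτ2v : τ2 = π/3 := aux1 τ2 hr2a.le hr2b.le hcτ2
    rcases mul_eq_zero.mp hct with hA1 | hA2
    · -- cos t = 1/2, sin t = -sin τ2 < 0 ; t = -π/3, τ1 = -2π/3
      have hcost : cos (τ1+τ2) = 1/2 := by linarith
      rw [hcost, hcτ2] at hprod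
      have hsint : sin (τ1+τ2) = -sin τ2 := by linarith
      have hsneg : sin (τ1+τ2) < 0 := by rw [hsint]; linarith
      have htlt : τ1 + τ2 ≤ 0 := by
        by_contra h
        push_neg at h
        rcases le_or_gt (τ1+τ2) π with h' | h'
        · exact absurd (Real.sin_nonneg_of_nonneg_of_le_pi h.le h') (by linarith)
        · have := Real.cos_nonpos_of_pi_div_two_le_of_le (x := τ1+τ2)
            (by linarith) (by linarith [hτ2v])
          linarith
      have key : -(τ1+τ2) = π/3 := by
        refine aux1 _ (by linarith) (by linarith [hτ2v]) ?_
        rw [Real.cos_neg]; exact hcost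
      left
      simp only [Prod.mk.injEq]
      constructor
      · linarith [hτ2v, key]
      · linarith
    · -- cos t = -1/2, sin t = sin τ2 > 0 ; t = 2π/3, τ1 = π/3
      have hcost : cos (τ1+τ2) = -(1/2) := by linarith
      rw [hcost, hcτ2] at hprod
      have hsint : sin (τ1+τ2) = sin τ2 := by linarith
      have hspos : 0 < sin (τ1+τ2) := by rw [hsint]; linarith
      have ht0 : 0 < τ1 + τ2 := by
        by_contra h
        push_neg at h
        exact absurd (sin_nonpos_neg _ (by linarith [hτ2v]) h) (by linarith)
      have htπ : τ1 + τ2 < π := by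
        by_contra h
        push_neg at h
        exact absurd (sin_nonpos_big _ h (by linarith [hτ2v])) (by linarith)
      have key : τ1 + τ2 = 2*π/3 := aux2 _ ht0.le htπ.le hcost
      right; right; left
      simp only [Prod.mk.injEq]
      constructor
      · linarith [hτ2v, key]
      · linarith
  · -- cos τ2 = -1/2, τ2 = 2π/3
    have hcτ2 : cos τ2 = -(1/2) := by linarith
    have hτ2v : τ2 = 2*π/3 := aux2 τ2 hr2a.le hr2b.le hcτ2
    rcases mul_eq_zero.mp hct with hB1 | hB2
    · -- cos t = 1/2, sin t = sin τ2 > 0 ; t = π/3, τ1 = -π/3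
      have hcost : cos (τ1+τ2) = 1/2 := by linarith
      rw [hcost, hcτ2] at hprod
      have hsint : sin (τ1+τ2) = sin τ2 := by linarith
      have hspos : 0 < sin (τ1+τ2) := by rw [hsint]; linarith
      have ht0 : 0 < τ1 + τ2 := by
        by_contra h
        push_neg at h
        exact absurd (sin_nonpos_neg _ (by linarith [hτ2v]) h) (by linarith)
      have htπ : τ1 + τ2 < π := by
        by_contra h
        push_neg at h
        exact absurd (sin_nonpos_big _ h (by linarith [hτ2v])) (by linarith)
      have key : τ1 + τ2 = π/3 := aux1 _ ht0.le htπ.le hcost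
      right; left
      simp only [Prod.mk.injEq]
      constructor
      · linarith [hτ2v, key]
      · linarith
    · -- cos t = -1/2, sin t = -sin τ2 < 0 ; t = 4π/3, τ1 = 2π/3
      have hcost : cos (τ1+τ2) = -(1/2) := by linarith
      rw [hcost, hcτ2] at hprod
      have hsint : sin (τ1+τ2) = -sin τ2 := by linarith
      have hsneg : sin (τ1+τ2) < 0 := by rw [hsint]; linarith
      have htπ : π < τ1 + τ2 := by
        by_contra h
        push_neg at h
        rcases le_or_gt 0 (τ1+τ2) with h' | h'
        · exact absurd (Real.sin_nonneg_of_nonneg_of_le_pi h' h) (by linarith)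
        · have : 0 < cos (τ1+τ2) := Real.cos_pos_of_mem_Ioo
            ⟨by linarith [hτ2v], by linarith⟩
          linarith
      have key : 2*π - (τ1+τ2) = 2*π/3 := by
        refine aux2 _ (by linarith [hτ2v]) (by linarith) ?_
        have h := Real.cos_sub_two_pi (2*π - (τ1+τ2))
        rw [show 2*π - (τ1+τ2) - 2*π = -(τ1+τ2) by ring, Real.cos_neg] at h
        rw [← h]; exact hcost
      right; right; right
      simp only [Prod.mk.injEq]
      constructor
      · linarith [hτ2v, key]
      · linarith
end
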